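/- arXiv:2605.01861 — 6 statements merged into one kernel-verified Lean document; each statement's English description precedes it below -/
import Mathlib

section
/- Let K ⊆ ℝ² be a Jordan curve, i.e., K is the image of a continuous injective map from the unit circle to ℝ². Let V(K) denote the set of maximal nondegenerate vertical segments contained in K. If V(K) is nonempty, then there exists a segment u_max ∈ V(K) whose length is greater than or equal to the length of every segment in V(K). -/
/-- A vertical segment is a set of the form `{x} × [a, b] ⊆ ℝ²` with `a < b`. -/
def IsVertSeg (s : Set (ℝ × ℝ)) : Prop :=
  ∃ x a b : ℝ, a < b ∧ s = {x} ×ˢ Set.Icc a b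

/-- The length of a vertical segment (for `{x} × [a, b]` this is `b - a`). -/
noncomputable def segLength (s : Set (ℝ × ℝ)) : ℝ :=
  sSup (Prod.snd '' s) - sInf (Prod.snd '' s)

/-- A Jordan curve is the image of a continuous injective map from the unit
circle `{z ∈ ℂ : |z| = 1}` into `ℝ²`. -/
def IsJordanCurve (K : Set (ℝ × ℝ)) : Prop :=
  ∃ γ : Metric.sphere (0 : ℂ) 1 → ℝ × ℝ,
    Continuous γ ∧ Function.Injective γ ∧ Set.range γ = K

/-- `V(K)`: the set of maximal nondegenerate vertical segments contained in `K`. -/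
def MaxVertSegsIn (K : Set (ℝ × ℝ)) : Set (Set (ℝ × ℝ)) :=
  {s | IsVertSeg s ∧ s ⊆ K ∧ ∀ t, IsVertSeg t → t ⊆ K → s ⊆ t → s = t}

open Set Filter Topology

lemma segLength_eq (x a b : ℝ) (h : a ≤ b) :
    segLength (({x} : Set ℝ) ×ˢ Set.Icc a b) = b - a := by
  rw [segLength, Set.snd_image_prod (singleton_nonempty x), csSup_Icc h, csInf_Icc h]

/-- Any nondegenerate vertical segment contained in a closed bounded set extends
to a maximal vertical segment. -/
lemma extend_seg (K : Set (ℝ × ℝ)) (hKc : IsClosed K) (hKb : Bornology.IsBounded K)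
    (x a b : ℝ) (hab : a < b) (hsub : ({x} : Set ℝ) ×ˢ Set.Icc a b ⊆ K) :
    ∃ t ∈ MaxVertSegsIn K, b - a ≤ segLength t := by
  set S : Set ℝ := {y | (x, y) ∈ K} with hS
  have hSc : IsClosed S := hKc.preimage (Continuous.prodMk_right x)
  obtain ⟨r, hr⟩ := hKb.subset_closedBall 0
  have hSb : ∀ y ∈ S, |y| ≤ r := by
    intro y hy
    have := hr hy
    simp only [Metric.mem_closedBall, Prod.dist_eq, Real.dist_eq] at this
    have : |y - 0| ≤ r := le_trans (le_max_right _ _) this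
    simpa using this
  have hIS : Set.Icc a b ⊆ S := by
    intro y hy; exact hsub ⟨rfl, hy⟩
  set T : Set ℝ := {y | y ≤ a ∧ Set.Icc y a ⊆ S} with hT
  set T' : Set ℝ := {y | b ≤ y ∧ Set.Icc b y ⊆ S} with hT'
  have haT : a ∈ T := ⟨le_refl a, fun z hz => hIS ⟨hz.1, hz.2.trans hab.le⟩⟩
  have hbT' : b ∈ T' := ⟨le_refl b, fun z hz => hIS ⟨hab.le.trans hz.1, hz.2⟩⟩
  have hTne : T.Nonempty := ⟨a, haT⟩
  have hT'ne : T'.Nonempty := ⟨b, hbT'⟩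
  have hTS : T ⊆ S := fun y hy => hy.2 ⟨le_refl y, hy.1⟩
  have hT'S : T' ⊆ S := fun y hy => hy.2 ⟨hy.1, le_refl y⟩
  have hTbdd : BddBelow T := ⟨-r, fun y hy => neg_le_of_abs_le (hSb y (hTS hy))⟩
  have hT'bdd : BddAbove T' := ⟨r, fun y hy => le_of_abs_le (hSb y (hT'S hy))⟩
  set a' := sInf T with ha'
  set b' := sSup T' with hb'
  have ha'a : a' ≤ a := csInf_le hTbdd haT
  have hbb' : b ≤ b' := le_csSup hT'bdd hbT'
  -- Icc a' a ⊆ S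
  have hIaS : Set.Icc a' a ⊆ S := by
    intro z hz
    rcases eq_or_lt_of_le hz.1 with h1 | h1
    · -- z = a'
      rw [← h1]
      rcases eq_or_lt_of_le ha'a with h2 | h2
      · rw [h2]; exact hIS ⟨le_refl a, hab.le⟩
      · have hcl : a' ∈ closure (Set.Ioc a' a) := by
          rw [closure_Ioc h2.ne]; exact ⟨le_refl a', h2.le⟩
        refine hSc.closure_subset (closure_mono ?_ hcl)
        intro w hw
        obtain ⟨y, hyT, hyw⟩ := exists_lt_of_csInf_lt hTne hw.1
        exact hyT.2 ⟨hyw.le, hw.2⟩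
    · obtain ⟨y, hyT, hyw⟩ := exists_lt_of_csInf_lt hTne h1
      exact hyT.2 ⟨hyw.le, hz.2⟩
  have hIbS : Set.Icc b b' ⊆ S := by
    intro z hz
    rcases eq_or_lt_of_le hz.2 with h1 | h1
    · rw [h1]
      rcases eq_or_lt_of_le hbb' with h2 | h2
      · rw [← h2]; exact hIS ⟨hab.le, le_refl b⟩
      · have hcl : b' ∈ closure (Set.Ico b b') := by
          rw [closure_Ico h2.ne]; exact ⟨h2.le, le_refl b'⟩
        refine hSc.closure_subset (closure_mono ?_ hcl)
        intro w hw
        obtain ⟨y, hyT, hyw⟩ := exists_lt_of_lt_csSup hT'ne hw.2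
        exact hyT.2 ⟨hw.1, hyw.le⟩
    · obtain ⟨y, hyT, hyw⟩ := exists_lt_of_lt_csSup hT'ne h1
      exact hyT.2 ⟨hz.1, hyw.le⟩
  have hI : Set.Icc a' b' ⊆ S := by
    intro z hz
    rcases le_total z a with h | h
    · exact hIaS ⟨hz.1, h⟩
    · rcases le_total z b with h2 | h2
      · exact hIS ⟨h, h2⟩
      · exact hIbS ⟨h2, hz.2⟩
  have ha'b' : a' < b' := lt_of_le_of_lt ha'a (hab.trans_le hbb')
  refine ⟨({x} : Set ℝ) ×ˢ Set.Icc a' b', ⟨⟨x, a', b', ha'b', rfl⟩, ?_, ?_⟩, ?_⟩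
  · rintro ⟨u, v⟩ ⟨hu, hv⟩
    simp only [mem_singleton_iff] at hu; subst hu
    exact hI hv
  · rintro t ⟨x', c, d, hcd, rfl⟩ htK hst
    have h1 := hst (show (x, a') ∈ _ from ⟨rfl, le_refl a', ha'b'.le⟩)
    have h2 := hst (show (x, b') ∈ _ from ⟨rfl, ha'b'.le, le_refl b'⟩)
    obtain ⟨⟨hc1, hd1⟩, hx1⟩ : (c ≤ a' ∧ a' ≤ d) ∧ x' = x := by
      obtain ⟨h, h'⟩ : x = x' ∧ c ≤ a' ∧ a' ≤ d := by simpa [Set.mem_prod] using h1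
      exact ⟨h', h.symm⟩
    obtain ⟨⟨hc2, hd2⟩, -⟩ : (c ≤ b' ∧ b' ≤ d) ∧ x' = x := by
      obtain ⟨h, h'⟩ : x = x' ∧ c ≤ b' ∧ b' ≤ d := by simpa [Set.mem_prod] using h2
      exact ⟨h', h.symm⟩
    subst hx1
    have hcS : Set.Icc c d ⊆ S := by
      intro z hz; exact htK ⟨rfl, hz⟩
    have hcT : c ∈ T := ⟨hc1.trans ha'a, fun z hz => hcS ⟨hz.1, hz.2.trans (hab.le.trans (hbb'.trans hd2))⟩⟩
    have hdT : d ∈ T' := ⟨hbb'.trans hd2, fun z hz => hcS ⟨(hc1.trans (ha'a.trans hab.le)).trans hz.1, hz.2⟩⟩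
    have : c = a' := le_antisymm hc1 (csInf_le hTbdd hcT)
    have hd : d = b' := le_antisymm (le_csSup hT'bdd hdT) hd2
    rw [this, hd]
  · rw [segLength_eq _ _ _ ha'b'.le]
    have : b - a ≤ b' - a' := by linarith
    exact this

/-- If `V(K)` is nonempty, there is a segment in `V(K)` of maximum length. -/
theorem exists_max_length_vertical_segment (K : Set (ℝ × ℝ))
    (hK : IsJordanCurve K) (hne : (MaxVertSegsIn K).Nonempty) :
    ∃ u_max ∈ MaxVertSegsIn K, ∀ v ∈ MaxVertSegsIn K, segLength v ≤ segLength u_max := by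
  obtain ⟨γ, hγc, -, hγr⟩ := hK
  have hKcpt : IsCompact K := hγr ▸ isCompact_range hγc
  have hKc : IsClosed K := hKcpt.isClosed
  have hKb : Bornology.IsBounded K := hKcpt.isBounded
  -- every segment in V has length ≤ diam K
  have hbd : ∀ s ∈ MaxVertSegsIn K, segLength s ≤ Metric.diam K := by
    intro s hs
    obtain ⟨⟨x, a, c, hac, rfl⟩, hsK, -⟩ := hs
    rw [segLength_eq _ _ _ hac.le]
    have h1 : (x, a) ∈ K := hsK ⟨rfl, le_refl a, hac.le⟩
    have h2 : (x, c) ∈ K := hsK ⟨rfl, hac.le, le_refl c⟩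
    have := Metric.dist_le_diam_of_mem hKb h1 h2
    rw [Prod.dist_eq] at this
    simp only [dist_self, Real.dist_eq] at this
    have h3 : |a - c| ≤ Metric.diam K := le_trans (le_max_right _ _) this
    rw [abs_sub_comm, abs_of_nonneg (by linarith)] at h3
    linarith
  set L := sSup (segLength '' MaxVertSegsIn K) with hL
  have himgne : (segLength '' MaxVertSegsIn K).Nonempty := hne.image _
  have himgbdd : BddAbove (segLength '' MaxVertSegsIn K) := by
    refine ⟨Metric.diam K, ?_⟩
    rintro _ ⟨s, hs, rfl⟩; exact hbd s hs
  have hLub : ∀ s ∈ MaxVertSegsIn K, segLength s ≤ L :=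
    fun s hs => le_csSup himgbdd ⟨s, hs, rfl⟩
  -- L > 0
  obtain ⟨s0, hs0⟩ := hne
  have hL0 : 0 < L := by
    have hs0' := hs0
    obtain ⟨⟨x0, a0, b0, hab0, rfl⟩, -, -⟩ := hs0'
    have := hLub _ hs0
    rw [segLength_eq _ _ _ hab0.le] at this
    linarith
  -- choose approximating segments
  have hchoice : ∀ n : ℕ, ∃ x a b : ℝ, a < b ∧ ({x} : Set ℝ) ×ˢ Set.Icc a b ⊆ K ∧
      L - 1 / (n + 1) < b - a ∧ b - a ≤ L := by
    intro n
    have hlt : L - 1 / (n + 1) < L := by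
      have : (0:ℝ) < 1 / (n + 1) := by positivity
      linarith
    obtain ⟨_, ⟨s, hs, rfl⟩, hgt⟩ := exists_lt_of_lt_csSup himgne hlt
    have hs' := hs
    obtain ⟨⟨x, a, b, hab, rfl⟩, hsK, -⟩ := hs'
    rw [segLength_eq _ _ _ hab.le] at hgt
    have hle := hLub _ hs
    rw [segLength_eq _ _ _ hab.le] at hle
    exact ⟨x, a, b, hab, hsK, hgt, hle⟩
  choose xs as bs habs hsubs hgts hles using hchoice
  -- the pair sequence in K × K
  set p : ℕ → (ℝ × ℝ) × (ℝ × ℝ) := fun n => ((xs n, as n), (xs n, bs n)) with hp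
  have hpK : ∀ n, p n ∈ K ×ˢ K := fun n =>
    ⟨hsubs n ⟨rfl, le_refl _, (habs n).le⟩, hsubs n ⟨rfl, (habs n).le, le_refl _⟩⟩
  obtain ⟨q, hqK, φ, hφ, hφt⟩ := (hKcpt.prod hKcpt).tendsto_subseq hpK
  -- extract limits
  have hxs : Tendsto (fun n => xs (φ n)) atTop (𝓝 q.1.1) :=
    ((continuous_fst.comp continuous_fst).tendsto q).comp hφt
  have hxs2 : Tendsto (fun n => xs (φ n)) atTop (𝓝 q.2.1) :=
    ((continuous_fst.comp continuous_snd).tendsto q).comp hφt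
  have has : Tendsto (fun n => as (φ n)) atTop (𝓝 q.1.2) :=
    ((continuous_snd.comp continuous_fst).tendsto q).comp hφt
  have hbs : Tendsto (fun n => bs (φ n)) atTop (𝓝 q.2.2) :=
    ((continuous_snd.comp continuous_snd).tendsto q).comp hφt
  set x := q.1.1
  set a := q.1.2
  set b := q.2.2
  have hxeq : q.2.1 = x := tendsto_nhds_unique hxs2 hxs
  -- b - a = L
  have hdiff : Tendsto (fun n => bs (φ n) - as (φ n)) atTop (𝓝 (b - a)) := hbs.sub has
  have hba : b - a = L := by
    have hsq1 : Tendsto (fun n : ℕ => L - 1 / ((φ n : ℝ) + 1)) atTop (𝓝 (L - 0)) := by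
      refine tendsto_const_nhds.sub ?_
      have h1 : Tendsto (fun n : ℕ => ((φ n : ℝ) + 1)) atTop atTop :=
        tendsto_atTop_add_const_right _ 1 (tendsto_natCast_atTop_atTop.comp hφ.tendsto_atTop)
      exact (tendsto_const_nhds.div_atTop h1 : Tendsto (fun n : ℕ => 1 / ((φ n : ℝ) + 1)) atTop (𝓝 0))
    refine le_antisymm ?_ ?_
    · exact le_of_tendsto hdiff (Eventually.of_forall fun n => hles (φ n))
    · have := le_of_tendsto_of_tendsto hsq1 hdiff
        (Eventually.of_forall fun n => (hgts (φ n)).le)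
      simpa using this
  have hab : a < b := by rw [← sub_pos, hba]; exact hL0
  -- {x} × Icc a b ⊆ K
  have hsubK : ({x} : Set ℝ) ×ˢ Set.Icc a b ⊆ K := by
    rintro ⟨u, y⟩ ⟨hu, hy⟩
    simp only [mem_singleton_iff] at hu; subst hu
    have hyt : Tendsto (fun n => max (as (φ n)) (min (bs (φ n)) y)) atTop
        (𝓝 (max a (min b y))) := has.max (hbs.min tendsto_const_nhds)
    have hyeq : max a (min b y) = y := by
      rcases hy with ⟨h1, h2⟩
      rw [min_eq_right h2, max_eq_right h1]
    rw [hyeq] at hyt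
    have hmem : ∀ n, (xs (φ n), max (as (φ n)) (min (bs (φ n)) y)) ∈ K := by
      intro n
      refine hsubs (φ n) ⟨rfl, le_max_left _ _, ?_⟩
      exact max_le ((habs (φ n)).le) (min_le_left _ _)
    exact hKc.mem_of_tendsto (hxs.prodMk_nhds hyt) (Eventually.of_forall hmem)
  obtain ⟨t, htV, htlen⟩ := extend_seg K hKc hKb x a b hab hsubK
  exact ⟨t, htV, fun v hv => (hLub v hv).trans (hba ▸ htlen)⟩
end

section
/- Let K ⊆ ℝ² be a Jordan curve and let δ > 0. Then the set of maximal nondegenerate vertical segments contained in K that have length at least δ is finite. -/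
lemma maxVertSegs_disjoint {K : Set (ℝ × ℝ)} {s t : Set (ℝ × ℝ)}
    (hs : s ∈ MaxVertSegsIn K) (ht : t ∈ MaxVertSegsIn K) (hne : s ≠ t) :
    Disjoint s t := by
  obtain ⟨⟨x, a, b, hab, rfl⟩, hsK, hsmax⟩ := hs
  obtain ⟨⟨x', a', b', hab', rfl⟩, htK, htmax⟩ := ht
  rw [Set.disjoint_left]
  rintro ⟨p1, p2⟩ hp hq
  simp only [Set.mem_prod, Set.mem_singleton_iff, Set.mem_Icc] at hp hq
  obtain ⟨rfl, hp2a, hp2b⟩ := hp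
  obtain ⟨hx', hq2a, hq2b⟩ := hq
  subst hx'
  set u : Set (ℝ × ℝ) := {p1} ×ˢ Set.Icc (min a a') (max b b') with hu
  have huv : IsVertSeg u :=
    ⟨p1, _, _, lt_of_le_of_lt (min_le_left a a') (lt_of_lt_of_le hab (le_max_left b b')), rfl⟩
  have huK : u ⊆ K := by
    rintro ⟨y1, y2⟩ hy
    simp only [hu, Set.mem_prod, Set.mem_singleton_iff, Set.mem_Icc] at hy
    obtain ⟨rfl, hy1, hy2⟩ := hy
    have hy1' : a ≤ y2 ∨ a' ≤ y2 := by rcases min_le_iff.1 hy1 with h | h <;> [left; right] <;> exact h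
    have hy2' : y2 ≤ b ∨ y2 ≤ b' := by rcases le_max_iff.1 hy2 with h | h <;> [left; right] <;> exact h
    rcases le_total y2 p2 with h | h
    · rcases hy1' with h4 | h4
      · exact hsK ⟨rfl, h4, le_trans h hp2b⟩
      · exact htK ⟨rfl, h4, le_trans h hq2b⟩
    · rcases hy2' with h4 | h4
      · exact hsK ⟨rfl, le_trans hp2a h, h4⟩
      · exact htK ⟨rfl, le_trans hq2a h, h4⟩
  have hsu : ({p1} ×ˢ Set.Icc a b : Set (ℝ × ℝ)) ⊆ u :=
    Set.prod_mono le_rfl (Set.Icc_subset_Icc (min_le_left _ _) (le_max_left _ _))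
  have htu : ({p1} ×ˢ Set.Icc a' b' : Set (ℝ × ℝ)) ⊆ u :=
    Set.prod_mono le_rfl (Set.Icc_subset_Icc (min_le_right _ _) (le_max_right _ _))
  exact hne ((hsmax u huv huK hsu).trans (htmax u huv huK htu).symm)


lemma unit_orth {c₁ c₂ x y x' y' : ℝ} (hc : c₁ ≠ 0 ∨ c₂ ≠ 0)
    (h1 : x ^ 2 + y ^ 2 = 1) (h2 : x' ^ 2 + y' ^ 2 = 1)
    (o1 : x * c₁ + y * c₂ = 0) (o2 : x' * c₁ + y' * c₂ = 0) :
    (x = x' ∧ y = y') ∨ (x = -x' ∧ y = -y') := by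
  have h3 : (x * y' - x' * y) * c₁ = 0 := by linear_combination y' * o1 - y * o2
  have h4 : (x * y' - x' * y) * c₂ = 0 := by linear_combination x * o2 - x' * o1
  have cross : x * y' - x' * y = 0 := by
    rcases hc with h | h
    · exact (mul_eq_zero.1 h3).resolve_right h
    · exact (mul_eq_zero.1 h4).resolve_right h
  have key : (x * x' + y * y' - 1) * (x * x' + y * y' + 1) = 0 := by nlinarith [cross, h1, h2]
  rcases mul_eq_zero.1 key with ht | ht
  · left
    have ht' : x * x' + y * y' = 1 := by linarith
    have hsum : (x - x') ^ 2 + (y - y') ^ 2 = 0 := by linear_combination h1 + h2 - 2 * ht'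
    have hx : (x - x') ^ 2 = 0 := by nlinarith [sq_nonneg (x - x'), sq_nonneg (y - y')]
    have hy : (y - y') ^ 2 = 0 := by nlinarith [sq_nonneg (x - x'), sq_nonneg (y - y')]
    exact ⟨sub_eq_zero.1 (pow_eq_zero_iff two_ne_zero |>.1 hx),
      sub_eq_zero.1 (pow_eq_zero_iff two_ne_zero |>.1 hy)⟩
  · right
    have ht' : x * x' + y * y' = -1 := by linarith
    have hsum : (x + x') ^ 2 + (y + y') ^ 2 = 0 := by linear_combination h1 + h2 + 2 * ht'
    have hx : (x + x') ^ 2 = 0 := by nlinarith [sq_nonneg (x + x'), sq_nonneg (y + y')]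
    have hy : (y + y') ^ 2 = 0 := by nlinarith [sq_nonneg (x + x'), sq_nonneg (y + y')]
    constructor
    · have := pow_eq_zero_iff two_ne_zero |>.1 hx; linarith
    · have := pow_eq_zero_iff two_ne_zero |>.1 hy; linarith

open Filter Topology in
/-- The maximal vertical segments in a Jordan curve of length at least δ form a finite set. -/
theorem finite_long_vertical_segments (K : Set (ℝ × ℝ)) (hK : IsJordanCurve K)
    (δ : ℝ) (hδ : 0 < δ) :
    {s ∈ MaxVertSegsIn K | δ ≤ segLength s}.Finite := by
  obtain ⟨γ, hγc, hγi, hγr⟩ := hK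
  by_contra hinf
  have hinf' : {s ∈ MaxVertSegsIn K | δ ≤ segLength s}.Infinite := hinf
  let f : ℕ ↪ {s ∈ MaxVertSegsIn K | δ ≤ segLength s} := hinf'.natEmbedding _
  have hfmem : ∀ n : ℕ, (f n : Set (ℝ × ℝ)) ∈ MaxVertSegsIn K ∧ δ ≤ segLength (f n) :=
    fun n => (f n).2
  have hfmax : ∀ n, (f n : Set (ℝ × ℝ)) ∈ MaxVertSegsIn K := fun n => (hfmem n).1
  have hfK : ∀ n, (f n : Set (ℝ × ℝ)) ⊆ K := fun n => (hfmax n).2.1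
  have hdata : ∀ n, ∃ x a b : ℝ, a < b ∧ δ ≤ b - a ∧
      (f n : Set (ℝ × ℝ)) = {x} ×ˢ Set.Icc a b := by
    intro n
    obtain ⟨x, a, b, hab, hs⟩ := (hfmax n).1
    refine ⟨x, a, b, hab, ?_, hs⟩
    have hl := (hfmem n).2
    rw [hs] at hl
    unfold segLength at hl
    rwa [Set.snd_image_prod (Set.singleton_nonempty x), csSup_Icc hab.le,
      csInf_Icc hab.le] at hl
  choose x a b hab hlen hseq using hdata
  have hpmem : ∀ n, ((x n, a n) : ℝ × ℝ) ∈ (f n : Set (ℝ × ℝ)) := by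
    intro n; rw [hseq n]; exact ⟨rfl, le_refl _, (hab n).le⟩
  have hqmem : ∀ n, ((x n, b n) : ℝ × ℝ) ∈ (f n : Set (ℝ × ℝ)) := by
    intro n; rw [hseq n]; exact ⟨rfl, (hab n).le, le_refl _⟩
  have hus : ∀ n, ∃ z : Metric.sphere (0 : ℂ) 1, γ z = (x n, a n) := by
    intro n
    have := hfK n (hpmem n); rw [← hγr] at this; exact this
  have hvs : ∀ n, ∃ z : Metric.sphere (0 : ℂ) 1, γ z = (x n, b n) := by
    intro n
    have := hfK n (hqmem n); rw [← hγr] at this; exact this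
  choose u hu using hus
  choose v hv using hvs
  obtain ⟨U, φ, hφ, hUc⟩ := CompactSpace.tendsto_subseq u
  obtain ⟨V, ψ, hψ, hVc⟩ := CompactSpace.tendsto_subseq fun k => v (φ k)
  set σ : ℕ → ℕ := fun k => φ (ψ k) with hσdef
  have hσ : StrictMono σ := hφ.comp hψ
  have hUσ : Tendsto (fun k => u (σ k)) atTop (𝓝 U) := hUc.comp hψ.tendsto_atTop
  have hVσ : Tendsto (fun k => v (σ k)) atTop (𝓝 V) := hVc
  -- U ≠ V
  have hγU : Tendsto (fun k => γ (u (σ k))) atTop (𝓝 (γ U)) := (hγc.tendsto U).comp hUσ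
  have hγV : Tendsto (fun k => γ (v (σ k))) atTop (𝓝 (γ V)) := (hγc.tendsto V).comp hVσ
  have hdistT : Tendsto (fun k => dist (γ (u (σ k))) (γ (v (σ k)))) atTop
      (𝓝 (dist (γ U) (γ V))) := hγU.dist hγV
  have hge : ∀ k, δ ≤ dist (γ (u (σ k))) (γ (v (σ k))) := by
    intro k
    rw [hu, hv, Prod.dist_eq]
    refine le_trans ?_ (le_max_right _ _)
    rw [Real.dist_eq, abs_sub_comm, abs_of_nonneg (by linarith [hab (σ k)])]
    exact hlen (σ k)
  have hUVd : δ ≤ dist (γ U) (γ V) := ge_of_tendsto hdistT (Eventually.of_forall hge)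
  have hne : U ≠ V := by rintro rfl; rw [dist_self] at hUVd; linarith
  have hneC : (U : ℂ) ≠ (V : ℂ) := fun h => hne (Subtype.ext h)
  -- the separating function
  set g : Metric.sphere (0 : ℂ) 1 → ℝ :=
    fun z => dist (z : ℂ) (U : ℂ) - dist (z : ℂ) (V : ℂ) with hgdef
  have hgcont : Continuous g :=
    (continuous_subtype_val.dist continuous_const).sub
      (continuous_subtype_val.dist continuous_const)
  have hgU : g U < 0 := by
    simp only [hgdef, dist_self, zero_sub, neg_lt_zero]
    exact dist_pos.2 hneC
  have hgV : 0 < g V := by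
    simp only [hgdef, dist_self, sub_zero]
    exact dist_pos.2 hneC.symm
  have hgu : ∀ᶠ k in atTop, g (u (σ k)) < 0 :=
    ((hgcont.tendsto U).comp hUσ).eventually_lt_const hgU
  have hgv : ∀ᶠ k in atTop, 0 < g (v (σ k)) :=
    ((hgcont.tendsto V).comp hVσ).eventually_const_lt hgV
  obtain ⟨N, hN⟩ := eventually_atTop.1 (hgu.and hgv)
  -- preconnectedness of preimages
  have hCpre : ∀ n, IsPreconnected (γ ⁻¹' (f n : Set (ℝ × ℝ))) := by
    intro n
    have hemb := (hγc.isClosedEmbedding hγi).toIsEmbedding.toIsInducing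
    rw [← hemb.isPreconnected_image,
      Set.image_preimage_eq_of_subset (by rw [hγr]; exact hfK n), hseq n]
    exact isPreconnected_singleton.prod isPreconnected_Icc
  -- find zeros of g in each preimage
  have hzex : ∀ k, N ≤ k → ∃ z : Metric.sphere (0 : ℂ) 1,
      z ∈ γ ⁻¹' (f (σ k) : Set (ℝ × ℝ)) ∧ g z = 0 := by
    intro k hk
    obtain ⟨h1, h2⟩ := hN k hk
    have hmema : u (σ k) ∈ γ ⁻¹' (f (σ k) : Set (ℝ × ℝ)) :=
      Set.mem_preimage.2 (by rw [hu]; exact hpmem _)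
    have hmemb : v (σ k) ∈ γ ⁻¹' (f (σ k) : Set (ℝ × ℝ)) :=
      Set.mem_preimage.2 (by rw [hv]; exact hqmem _)
    have hiv := (hCpre (σ k)).intermediate_value hmema hmemb hgcont.continuousOn
    obtain ⟨z, hz, hz0⟩ := hiv ⟨h1.le, h2.le⟩
    exact ⟨z, hz, hz0⟩
  obtain ⟨z₁, hz₁, hg₁⟩ := hzex N le_rfl
  obtain ⟨z₂, hz₂, hg₂⟩ := hzex (N + 1) (by omega)
  obtain ⟨z₃, hz₃, hg₃⟩ := hzex (N + 2) (by omega)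
  -- distinctness
  have hdisj : ∀ m n : ℕ, m ≠ n → ∀ z : Metric.sphere (0 : ℂ) 1,
      z ∈ γ ⁻¹' (f m : Set (ℝ × ℝ)) → z ∈ γ ⁻¹' (f n : Set (ℝ × ℝ)) → False := by
    intro m n hmn z h1 h2
    have hne2 : (f m : Set (ℝ × ℝ)) ≠ (f n : Set (ℝ × ℝ)) :=
      fun h => hmn (f.injective (Subtype.ext h))
    exact Set.disjoint_left.1 (maxVertSegs_disjoint (hfmax m) (hfmax n) hne2) h1 h2
  have h12 : z₁ ≠ z₂ := fun h =>
    hdisj (σ N) (σ (N + 1)) (hσ.injective.ne (by omega)) z₁ hz₁ (h ▸ hz₂)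
  have h23 : z₂ ≠ z₃ := fun h =>
    hdisj (σ (N + 1)) (σ (N + 2)) (hσ.injective.ne (by omega)) z₂ hz₂ (h ▸ hz₃)
  have h13 : z₁ ≠ z₃ := fun h =>
    hdisj (σ N) (σ (N + 2)) (hσ.injective.ne (by omega)) z₁ hz₁ (h ▸ hz₃)
  -- coordinates
  have habs1 : ∀ z : Metric.sphere (0 : ℂ) 1, (z : ℂ).re ^ 2 + (z : ℂ).im ^ 2 = 1 := by
    intro z
    have hz1 : ‖(z : ℂ)‖ = 1 := by
      have hm : dist (z : ℂ) 0 = 1 := z.2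
      rwa [Complex.dist_eq, sub_zero] at hm
    have := Complex.sq_norm (z : ℂ)
    rw [hz1] at this
    simp only [Complex.normSq_apply] at this
    nlinarith [this]
  have hcoord : ∀ z : Metric.sphere (0 : ℂ) 1, g z = 0 →
      (z : ℂ).re * ((V : ℂ).re - (U : ℂ).re) + (z : ℂ).im * ((V : ℂ).im - (U : ℂ).im) = 0 := by
    intro z hz
    have hdisteq : dist (z : ℂ) (U : ℂ) = dist (z : ℂ) (V : ℂ) := by
      have := hz; simp only [hgdef] at this; linarith
    have hnsq : Complex.normSq ((z : ℂ) - (U : ℂ)) = Complex.normSq ((z : ℂ) - (V : ℂ)) := by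
      rw [← Complex.sq_norm, ← Complex.sq_norm, ← Complex.dist_eq, ← Complex.dist_eq, hdisteq]
    simp only [Complex.normSq_apply, Complex.sub_re, Complex.sub_im] at hnsq
    have hU1 := habs1 U
    have hV1 := habs1 V
    linear_combination (1 / 2) * hnsq - (1 / 2) * hU1 + (1 / 2) * hV1
  have hc : ((V : ℂ).re - (U : ℂ).re) ≠ 0 ∨ ((V : ℂ).im - (U : ℂ).im) ≠ 0 := by
    by_contra h
    push_neg at h
    exact hneC (Complex.ext (by linarith [h.1]) (by linarith [h.2])).symm
  have hext : ∀ w w' : Metric.sphere (0 : ℂ) 1,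
      (w : ℂ).re = (w' : ℂ).re → (w : ℂ).im = (w' : ℂ).im → w = w' :=
    fun w w' h1 h2 => Subtype.ext (Complex.ext h1 h2)
  have o12 := unit_orth hc (habs1 z₁) (habs1 z₂) (hcoord z₁ hg₁) (hcoord z₂ hg₂)
  have o13 := unit_orth hc (habs1 z₁) (habs1 z₃) (hcoord z₁ hg₁) (hcoord z₃ hg₃)
  rcases o12 with ⟨e1, e2⟩ | ⟨e1, e2⟩
  · exact h12 (hext _ _ e1 e2)
  · rcases o13 with ⟨e3, e4⟩ | ⟨e3, e4⟩
    · exact h13 (hext _ _ e3 e4)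
    · exact h23 (hext _ _ (by linarith) (by linarith))
end

section
/- Let K ⊆ ℝ² be a Jordan curve. The set of maximal nondegenerate vertical segments contained in K is countable. -/
/-- A connected subset of the unit circle with at least two points has
nonempty interior. -/
lemma sphere_interior_nonempty_of_preconnected
    {A : Set (Metric.sphere (0 : ℂ) 1)} (hA : IsPreconnected A)
    {p q : Metric.sphere (0 : ℂ) 1} (hp : p ∈ A) (hq : q ∈ A) (hpq : p ≠ q) :
    (interior A).Nonempty := by
  by_cases huniv : A = Set.univ
  · exact ⟨p, by simp [huniv]⟩
  obtain ⟨z₀, hz₀⟩ : ∃ z₀, z₀ ∉ A := by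
    by_contra h
    push_neg at h
    exact huniv (Set.eq_univ_of_forall h)
  have habs : ∀ w : Metric.sphere (0 : ℂ) 1, ‖(w : ℂ)‖ = 1 := by
    intro w
    have := w.2
    simpa using mem_sphere_zero_iff_norm.mp this
  have hz₀ne : (z₀ : ℂ) ≠ 0 := by
    intro h
    have := habs z₀
    rw [h] at this
    simp at this
  set f : Metric.sphere (0 : ℂ) 1 → ℝ := fun w => Complex.arg (-((w : ℂ) / (z₀ : ℂ))) with hf
  have habs' : ∀ w : Metric.sphere (0 : ℂ) 1, ‖-((w : ℂ) / (z₀ : ℂ))‖ = 1 := by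
    intro w
    simp [map_div₀, habs w, habs z₀]
  have hinj : Function.Injective f := by
    intro w₁ w₂ h
    have : -((w₁ : ℂ) / (z₀ : ℂ)) = -((w₂ : ℂ) / (z₀ : ℂ)) :=
      Complex.ext_norm_arg (by rw [habs' w₁, habs' w₂]) h
    have : (w₁ : ℂ) = (w₂ : ℂ) := by
      field_simp at this
      exact neg_inj.mp this
    exact Subtype.ext this
  have hslit : ∀ w : Metric.sphere (0 : ℂ) 1, w ≠ z₀ →
      -((w : ℂ) / (z₀ : ℂ)) ∈ Complex.slitPlane := by
    intro w hw
    by_contra h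
    rw [Complex.mem_slitPlane_iff] at h
    push_neg at h
    obtain ⟨h1, h2⟩ := h
    set u := -((w : ℂ) / (z₀ : ℂ)) with hu
    have : u = (u.re : ℂ) := Complex.ext rfl (by simp [h2])
    have habsu : ‖u‖ = 1 := habs' w
    rw [this] at habsu
    rw [Complex.norm_real, Real.norm_eq_abs] at habsu
    have : u.re = -1 := by
      rcases abs_eq (by norm_num : (0:ℝ) ≤ 1) |>.mp habsu with h | h
      · linarith
      · exact h
    have : u = -1 := by
      apply Complex.ext <;> simp [this, h2]
    rw [hu] at this
    have : (w : ℂ) = (z₀ : ℂ) := by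
      field_simp at this
      linear_combination -this
    exact hw (Subtype.ext this)
  have hcont : ContinuousOn f ({z₀}ᶜ : Set (Metric.sphere (0 : ℂ) 1)) := by
    intro w hw
    apply ContinuousAt.continuousWithinAt
    have hg : Continuous (fun w : Metric.sphere (0 : ℂ) 1 => -((w : ℂ) / (z₀ : ℂ))) := by
      continuity
    show ContinuousAt (Complex.arg ∘ fun w : Metric.sphere (0 : ℂ) 1 => -((w : ℂ) / (z₀ : ℂ))) w
    exact ContinuousAt.comp (g := Complex.arg)
      (f := fun w : Metric.sphere (0 : ℂ) 1 => -((w : ℂ) / (z₀ : ℂ)))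
      (Complex.continuousAt_arg (hslit w hw)) hg.continuousAt
  have hAsub : A ⊆ ({z₀}ᶜ : Set (Metric.sphere (0 : ℂ) 1)) := by
    intro a ha h
    rw [Set.mem_singleton_iff] at h
    exact hz₀ (h ▸ ha)
  have himg : IsPreconnected (f '' A) := hA.image f (hcont.mono hAsub)
  have hfp : f p ∈ f '' A := ⟨p, hp, rfl⟩
  have hfq : f q ∈ f '' A := ⟨q, hq, rfl⟩
  have hne : f p ≠ f q := fun h => hpq (hinj h)
  set u := min (f p) (f q) with hu
  set v := max (f p) (f q) with hv
  have huv : u < v := min_lt_max.mpr hne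
  have hIcc : Set.Icc u v ⊆ f '' A := by
    rcases le_total (f p) (f q) with h | h
    · have : u = f p ∧ v = f q := ⟨min_eq_left h, max_eq_right h⟩
      rw [this.1, this.2]
      exact himg.Icc_subset hfp hfq
    · have : u = f q ∧ v = f p := ⟨min_eq_right h, max_eq_left h⟩
      rw [this.1, this.2]
      exact himg.Icc_subset hfq hfp
  set O := ({z₀}ᶜ : Set (Metric.sphere (0 : ℂ) 1)) ∩ f ⁻¹' Set.Ioo u v with hO
  have hOopen : IsOpen O := hcont.isOpen_inter_preimage isOpen_compl_singleton isOpen_Ioo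
  have hOA : O ⊆ A := by
    rintro w ⟨-, hw2⟩
    obtain ⟨a, ha, hfa⟩ := hIcc (Set.Ioo_subset_Icc_self hw2)
    exact hinj hfa ▸ ha
  have hOne : O.Nonempty := by
    have hm : (u + v) / 2 ∈ Set.Icc u v := ⟨by linarith, by linarith⟩
    obtain ⟨a, ha, hfa⟩ := hIcc hm
    refine ⟨a, hAsub ha, ?_⟩
    rw [Set.mem_preimage, hfa]
    exact ⟨by linarith, by linarith⟩
  obtain ⟨w, hw⟩ := hOne
  exact ⟨w, interior_maximal hOA hOopen hw⟩

lemma Icc_union_overlap {a b a' b' c : ℝ} (h1 : a ≤ c) (h2 : c ≤ b) (h3 : a' ≤ c)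
    (h4 : c ≤ b') :
    Set.Icc a b ∪ Set.Icc a' b' = Set.Icc (min a a') (max b b') := by
  ext y
  simp only [Set.mem_union, Set.mem_Icc, min_le_iff, le_max_iff]
  constructor
  · rintro (⟨h5, h6⟩ | ⟨h5, h6⟩)
    exacts [⟨Or.inl h5, Or.inl h6⟩, ⟨Or.inr h5, Or.inr h6⟩]
  · rintro ⟨h5 | h5, h6 | h6⟩ <;> rcases le_total y c with hc | hc <;>
      first
        | (left; exact ⟨by linarith, by linarith⟩)
        | (right; exact ⟨by linarith, by linarith⟩)

/-- The set of maximal nondegenerate vertical segments contained in a Jordan curve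
is countable. -/
theorem countable_max_vertical_segments (K : Set (ℝ × ℝ)) (hK : IsJordanCurve K) :
    (MaxVertSegsIn K).Countable := by
  obtain ⟨γ, hγc, hγi, hγr⟩ := hK
  have hemb : IsClosedMap γ := (hγc.isClosedEmbedding hγi).isClosedMap
  -- any two intersecting maximal segments are equal
  have hdisj : ∀ s ∈ MaxVertSegsIn K, ∀ t ∈ MaxVertSegsIn K,
      (s ∩ t).Nonempty → s = t := by
    rintro s hs t ht ⟨P, hPs, hPt⟩
    obtain ⟨⟨x, a, b, hab, rfl⟩, hsK, hsmax⟩ := hs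
    obtain ⟨⟨x', a', b', hab', rfl⟩, htK, htmax⟩ := ht
    rw [Set.mem_prod, Set.mem_singleton_iff] at hPs hPt
    obtain ⟨hP1, hP2⟩ := hPs
    obtain ⟨hP1', hP2'⟩ := hPt
    have hxx : x' = x := hP1' ▸ hP1.symm ▸ rfl
    rw [hxx] at htK htmax ⊢
    set u : Set (ℝ × ℝ) := {x} ×ˢ Set.Icc (min a a') (max b b') with hu
    have huseg : IsVertSeg u :=
      ⟨x, _, _, lt_of_le_of_lt (min_le_left _ _) (lt_of_lt_of_le hab (le_max_left _ _)), rfl⟩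
    have huU : u = {x} ×ˢ Set.Icc a b ∪ {x} ×ˢ Set.Icc a' b' := by
      rw [hu, ← Set.prod_union, Icc_union_overlap hP2.1 hP2.2 hP2'.1 hP2'.2]
    have huK : u ⊆ K := by rw [huU]; exact Set.union_subset hsK htK
    have h1 : {x} ×ˢ Set.Icc a b = u :=
      hsmax u huseg huK (by rw [huU]; exact Set.subset_union_left)
    have h2 : {x} ×ˢ Set.Icc a' b' = u :=
      htmax u huseg huK (by rw [huU]; exact Set.subset_union_right)
    rw [h1, h2]
  obtain ⟨D, hDc, hDd⟩ := TopologicalSpace.exists_countable_dense (Metric.sphere (0 : ℂ) 1)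
  have key : ∀ s ∈ MaxVertSegsIn K, ∃ d, d ∈ D ∧ d ∈ interior (γ ⁻¹' s) := by
    rintro s ⟨⟨x, a, b, hab, rfl⟩, hsK, -⟩
    set s : Set (ℝ × ℝ) := {x} ×ˢ Set.Icc a b with hs
    have hsconn : IsPreconnected s := isPreconnected_singleton.prod isPreconnected_Icc
    have hsrange : s ⊆ Set.range γ := hγr ▸ hsK
    have hApre : IsPreconnected (γ ⁻¹' s) :=
      hsconn.preimage_of_isClosedMap hγi hemb hsrange
    obtain ⟨p, hp⟩ := hsrange (show ((x, a) : ℝ × ℝ) ∈ s by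
      exact ⟨rfl, le_refl a, le_of_lt hab⟩)
    obtain ⟨q, hq⟩ := hsrange (show ((x, b) : ℝ × ℝ) ∈ s by
      exact ⟨rfl, le_of_lt hab, le_refl b⟩)
    have hpA : p ∈ γ ⁻¹' s := by
      rw [Set.mem_preimage, hp]; exact ⟨rfl, le_refl a, le_of_lt hab⟩
    have hqA : q ∈ γ ⁻¹' s := by
      rw [Set.mem_preimage, hq]; exact ⟨rfl, le_of_lt hab, le_refl b⟩
    have hpq : p ≠ q := by
      intro h
      rw [h, hq] at hp
      exact absurd (congrArg Prod.snd hp) (by simpa using hab.ne')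
    obtain ⟨w, hw⟩ := sphere_interior_nonempty_of_preconnected hApre hpA hqA hpq
    obtain ⟨d, hd1, hd2⟩ := hDd.inter_open_nonempty _ isOpen_interior ⟨w, hw⟩
    exact ⟨d, hd2, hd1⟩
  choose! φ hφD hφI using key
  have hmaps : Set.MapsTo φ (MaxVertSegsIn K) D := fun s hs => hφD s hs
  apply hmaps.countable_of_injOn _ hDc
  intro s hs t ht h
  apply hdisj s hs t ht
  have h1 : φ s ∈ γ ⁻¹' s := interior_subset (hφI s hs)
  have h2 : φ s ∈ γ ⁻¹' t := interior_subset (h ▸ hφI t ht)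
  exact ⟨γ (φ s), h1, h2⟩
end

section
/- Let K ⊆ ℝ² be a Jordan curve and let (u_n)_{n ∈ ℕ} be an injective sequence of maximal nondegenerate vertical segments contained in K. Then the lengths of the segments u_n tend to 0 as n → ∞. -/
open Set

lemma segLen_eq (x a b : ℝ) (h : a ≤ b) :
    segLength (({x} : Set ℝ) ×ˢ Icc a b) = b - a := by
  unfold segLength
  rw [Set.snd_image_prod (by simp) (Icc a b), csSup_Icc h, csInf_Icc h]

lemma icc_union (a₁ b₁ a₂ b₂ y : ℝ) (h1 : a₁ ≤ y) (h2 : y ≤ b₁) (h3 : a₂ ≤ y) (h4 : y ≤ b₂) :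
    Icc a₁ b₁ ∪ Icc a₂ b₂ = Icc (min a₁ a₂) (max b₁ b₂) := by
  ext z
  simp only [mem_union, mem_Icc, min_le_iff, le_max_iff]
  constructor
  · rintro (⟨h, h'⟩ | ⟨h, h'⟩)
    · exact ⟨Or.inl h, Or.inl h'⟩
    · exact ⟨Or.inr h, Or.inr h'⟩
  · rintro ⟨h | h, h' | h'⟩
    · exact Or.inl ⟨h, h'⟩
    · rcases le_total z y with hz | hz
      · exact Or.inl ⟨h, le_trans hz h2⟩
      · exact Or.inr ⟨le_trans h3 hz, h'⟩
    · rcases le_total z y with hz | hz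
      · exact Or.inr ⟨h, le_trans hz h4⟩
      · exact Or.inl ⟨le_trans h1 hz, h'⟩
    · exact Or.inr ⟨h, h'⟩

/-- Two intersecting maximal vertical segments in `K` are equal. -/
lemma max_seg_eq (K : Set (ℝ × ℝ)) (s t : Set (ℝ × ℝ)) (hs : s ∈ MaxVertSegsIn K)
    (ht : t ∈ MaxVertSegsIn K) (h : (s ∩ t).Nonempty) : s = t := by
  obtain ⟨x₁, a₁, b₁, hab₁, hseq⟩ := hs.1
  obtain ⟨x₂, a₂, b₂, hab₂, hteq⟩ := ht.1
  obtain ⟨p, hp₁, hp₂⟩ := h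
  rw [hseq] at hp₁; rw [hteq] at hp₂
  obtain ⟨hpx₁, hpy₁⟩ := hp₁
  have hx12 : x₁ = x₂ := by
    have e1 : p.1 = x₁ := hpx₁
    have e2 : p.1 = x₂ := hp₂.1
    rw [← e1, e2]
  have hy₂ : p.2 ∈ Icc a₂ b₂ := hp₂.2
  set T : Set (ℝ × ℝ) := ({x₁} : Set ℝ) ×ˢ Icc (min a₁ a₂) (max b₁ b₂) with hT
  have hTeq : T = s ∪ t := by
    rw [hseq, hteq, hx12, ← Set.prod_union, hT, hx12,
      icc_union a₁ b₁ a₂ b₂ p.2 hpy₁.1 hpy₁.2 hy₂.1 hy₂.2]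
  have hTvs : IsVertSeg T :=
    ⟨x₁, min a₁ a₂, max b₁ b₂,
      lt_of_le_of_lt (min_le_left _ _) (lt_of_lt_of_le hab₁ (le_max_left _ _)), rfl⟩
  have hTK : T ⊆ K := by rw [hTeq]; exact union_subset hs.2.1 ht.2.1
  have h1 : s = T := hs.2.2 T hTvs hTK (by rw [hTeq]; exact subset_union_left)
  have h2 : t = T := ht.2.2 T hTvs hTK (by rw [hTeq]; exact subset_union_right)
  rw [h1, h2]

/-- zeros of `z ↦ Re(z * conj c)` on the unit sphere. -/
lemma zero_re_mul_conj (c w : ℂ) (hc : c ≠ 0) (hw : ‖w‖ = 1)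
    (h : (w * (starRingEnd ℂ) c).re = 0) :
    w = (‖c‖ : ℂ) * Complex.I / (starRingEnd ℂ) c ∨
      w = -((‖c‖ : ℂ) * Complex.I / (starRingEnd ℂ) c) := by
  have hcc : (starRingEnd ℂ) c ≠ 0 := by simpa using hc
  set v := w * (starRingEnd ℂ) c with hv
  have habs : ‖v‖ = ‖c‖ := by
    rw [hv, norm_mul, hw, Complex.norm_conj, one_mul]
  have hvim : v = (v.im : ℂ) * Complex.I := by
    apply Complex.ext <;> simp [h]
  have him : |v.im| = ‖c‖ := by
    rw [← habs, hvim]; simp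
  rcases (abs_eq (norm_nonneg c)).mp him with h' | h'
  · left
    rw [eq_div_iff hcc, ← hv, hvim, h']
  · right
    rw [← neg_div, eq_div_iff hcc, ← hv, hvim, h']
    push_cast
    ring

/-- The lengths of an injective sequence of maximal vertical segments in a Jordan
curve tend to 0. -/
theorem tendsto_length_zero_of_injective_seq (K : Set (ℝ × ℝ)) (hK : IsJordanCurve K)
    (u : ℕ → Set (ℝ × ℝ)) (hu : ∀ n, u n ∈ MaxVertSegsIn K)
    (hinj : Function.Injective u) :
    Filter.Tendsto (fun n => segLength (u n)) Filter.atTop (nhds 0) := by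
  classical
  obtain ⟨γ, hγc, hγi, hγr⟩ := hK
  have hseg : ∀ n, ∃ x a b : ℝ, a < b ∧ u n = {x} ×ˢ Icc a b := fun n => (hu n).1
  choose X A B hAB hueq using hseg
  have hlen : ∀ n, segLength (u n) = B n - A n := fun n => by
    rw [hueq n]; exact segLen_eq _ _ _ (hAB n).le
  by_contra hcon
  rw [Metric.tendsto_atTop] at hcon
  push_neg at hcon
  obtain ⟨ε, hε, hfreq⟩ := hcon
  have hfreq' : ∃ᶠ n in Filter.atTop, ε ≤ B n - A n := by
    rw [Filter.frequently_atTop]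
    intro N
    obtain ⟨n, hn, hd⟩ := hfreq N
    refine ⟨n, hn, ?_⟩
    rw [Real.dist_eq, sub_zero, hlen n, abs_of_pos (by linarith [hAB n])] at hd
    exact hd
  obtain ⟨φ, hφ, hφP⟩ := Filter.extraction_of_frequently_atTop hfreq'
  -- endpoints of segments lie on the curve
  have hmemA : ∀ n, ((X n, A n) : ℝ × ℝ) ∈ u n := fun n => by
    rw [hueq n]; exact ⟨rfl, le_refl _, (hAB n).le⟩
  have hmemB : ∀ n, ((X n, B n) : ℝ × ℝ) ∈ u n := fun n => by
    rw [hueq n]; exact ⟨rfl, (hAB n).le, le_refl _⟩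
  have hKA : ∀ n, ∃ z, γ z = (X n, A n) := fun n => by
    have h1 : (X n, A n) ∈ K := (hu n).2.1 (hmemA n)
    rw [← hγr] at h1; exact h1
  have hKB : ∀ n, ∃ z, γ z = (X n, B n) := fun n => by
    have h1 : (X n, B n) ∈ K := (hu n).2.1 (hmemB n)
    rw [← hγr] at h1; exact h1
  choose s hs using hKA
  choose s' hs' using hKB
  -- extract a convergent subsequence on the compact sphere × sphere
  obtain ⟨⟨t₁, t₂⟩, -, ψ, hψ, hψt⟩ :=
    isCompact_univ.tendsto_subseq (x := fun k => (s (φ k), s' (φ k))) (fun k => mem_univ _)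
  set ι : ℕ → ℕ := fun k => φ (ψ k) with hιdef
  have hι : StrictMono ι := hφ.comp hψ
  have hts : Filter.Tendsto (fun k => s (ι k)) Filter.atTop (nhds t₁) :=
    (continuous_fst.tendsto _).comp hψt
  have hts' : Filter.Tendsto (fun k => s' (ι k)) Filter.atTop (nhds t₂) :=
    (continuous_snd.tendsto _).comp hψt
  have hga : Filter.Tendsto (fun k => ((X (ι k), A (ι k)) : ℝ × ℝ)) Filter.atTop (nhds (γ t₁)) := by
    have h1 := (hγc.tendsto t₁).comp hts
    simpa [Function.comp_def, hs] using h1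
  have hgb : Filter.Tendsto (fun k => ((X (ι k), B (ι k)) : ℝ × ℝ)) Filter.atTop (nhds (γ t₂)) := by
    have h1 := (hγc.tendsto t₂).comp hts'
    simpa [Function.comp_def, hs'] using h1
  have hA2 : Filter.Tendsto (fun k => A (ι k)) Filter.atTop (nhds (γ t₁).2) :=
    (continuous_snd.tendsto _).comp hga
  have hB2 : Filter.Tendsto (fun k => B (ι k)) Filter.atTop (nhds (γ t₂).2) :=
    (continuous_snd.tendsto _).comp hgb
  have hge : ε ≤ (γ t₂).2 - (γ t₁).2 :=
    ge_of_tendsto' (hB2.sub hA2) (fun k => hφP (ψ k))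
  have ht12 : t₁ ≠ t₂ := by
    intro h
    rw [h] at hge
    linarith
  -- the complex linear functional separating t₁ and t₂
  have habs1 : ∀ z : Metric.sphere (0 : ℂ) 1, ‖(z : ℂ)‖ = 1 := fun z => by
    exact mem_sphere_zero_iff_norm.mp z.2
  set c : ℂ := (t₁ : ℂ) - (t₂ : ℂ) with hcdef
  have hc0 : c ≠ 0 := sub_ne_zero.mpr (fun h => ht12 (Subtype.ext h))
  set f : Metric.sphere (0 : ℂ) 1 → ℝ := fun z => ((z : ℂ) * (starRingEnd ℂ) c).re with hfdef
  have hfc : Continuous f :=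
    Complex.continuous_re.comp ((continuous_subtype_val.mul continuous_const))
  set w : ℂ := (t₁ : ℂ) * (starRingEnd ℂ) (t₂ : ℂ) with hwdef
  have habsw : ‖w‖ = 1 := by
    rw [hwdef, norm_mul, habs1, Complex.norm_conj, habs1, one_mul]
  have hwre : w.re < 1 := by
    rcases lt_or_eq_of_le (le_trans (le_abs_self w.re)
      (le_of_le_of_eq (Complex.abs_re_le_norm w) habsw)) with h | h
    · exact h
    · exfalso
      have him : w.im = 0 := by
        have h2 : Complex.normSq w = 1 := by rw [Complex.normSq_eq_norm_sq, habsw]; norm_num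
        have h3 : w.re * w.re + w.im * w.im = 1 := by rw [← Complex.normSq_apply, h2]
        nlinarith
      have hw1 : w = 1 := by
        apply Complex.ext <;> simp [h, him]
      have : (t₁ : ℂ) = (t₂ : ℂ) := by
        have h4 : (t₂ : ℂ) * (starRingEnd ℂ) (t₂ : ℂ) = 1 := by
          rw [Complex.mul_conj, Complex.normSq_eq_norm_sq, habs1]; norm_num
        calc (t₁ : ℂ) = (t₁ : ℂ) * ((t₂ : ℂ) * (starRingEnd ℂ) (t₂ : ℂ)) := by rw [h4, mul_one]
          _ = w * (t₂ : ℂ) := by rw [hwdef]; ring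
          _ = (t₂ : ℂ) := by rw [hw1, one_mul]
      exact ht12 (Subtype.ext this)
  have hft1 : f t₁ = 1 - w.re := by
    rw [hfdef]
    simp only [hcdef, map_sub, mul_sub, Complex.sub_re]
    rw [Complex.mul_conj, Complex.normSq_eq_norm_sq, habs1]
    norm_num [hwdef]
  have hft2 : f t₂ = w.re - 1 := by
    rw [hfdef]
    simp only [hcdef, map_sub, mul_sub, Complex.sub_re]
    have h2 : ((t₂ : ℂ) * (starRingEnd ℂ) (t₁ : ℂ)).re = w.re := by
      rw [← Complex.conj_re w]
      congr 1
      rw [hwdef, map_mul]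
      simp [mul_comm]
    rw [h2, Complex.mul_conj, Complex.normSq_eq_norm_sq, habs1]
    norm_num
  have hpos : 0 < f t₁ := by rw [hft1]; linarith
  have hneg : f t₂ < 0 := by rw [hft2]; linarith
  -- eventually the endpoints of u (ι k) have f of opposite signs
  have hfs : Filter.Tendsto (fun k => f (s (ι k))) Filter.atTop (nhds (f t₁)) :=
    (hfc.tendsto t₁).comp hts
  have hfs' : Filter.Tendsto (fun k => f (s' (ι k))) Filter.atTop (nhds (f t₂)) :=
    (hfc.tendsto t₂).comp hts'
  have hev : ∀ᶠ k in Filter.atTop, 0 < f (s (ι k)) ∧ f (s' (ι k)) < 0 :=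
    (hfs.eventually (lt_mem_nhds hpos)).and (hfs'.eventually (gt_mem_nhds hneg))
  obtain ⟨N, hN⟩ := Filter.eventually_atTop.mp hev
  -- the preimages of the segments
  have hemb := hγc.isClosedEmbedding hγi
  set hom : Metric.sphere (0 : ℂ) 1 ≃ₜ Set.range γ := hemb.toIsEmbedding.toHomeomorph
    with homdef
  have hγhom : ∀ y : Set.range γ, γ (hom.symm y) = (y : ℝ × ℝ) := fun y =>
    congrArg Subtype.val (hom.apply_symm_apply y)
  have hCconn : ∀ n, IsPreconnected (γ ⁻¹' u n) := by
    intro n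
    have h1 : IsPreconnected (u n) := by
      rw [hueq n]; exact isPreconnected_singleton.prod isPreconnected_Icc
    have hsub : u n ⊆ Set.range γ := hγr ▸ (hu n).2.1
    haveI : PreconnectedSpace (u n) := Subtype.preconnectedSpace h1
    have hqc : Continuous (fun p : ↥(u n) => hom.symm ⟨(p : ℝ × ℝ), hsub p.2⟩) :=
      hom.symm.continuous.comp (Continuous.subtype_mk continuous_subtype_val _)
    have hrange : Set.range (fun p : ↥(u n) => hom.symm ⟨(p : ℝ × ℝ), hsub p.2⟩) = γ ⁻¹' u n := by
      ext z
      constructor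
      · rintro ⟨p, rfl⟩
        show γ (hom.symm _) ∈ u n
        rw [hγhom]
        exact p.2
      · intro hz
        refine ⟨⟨γ z, hz⟩, ?_⟩
        have h3 : (⟨γ z, hsub hz⟩ : Set.range γ) = hom z := Subtype.ext rfl
        show hom.symm ⟨γ z, hsub hz⟩ = z
        rw [h3, hom.symm_apply_apply]
    rw [← hrange]
    exact isPreconnected_range hqc
  have hdisj : ∀ a b : ℕ, (∃ z, z ∈ γ ⁻¹' u a ∧ z ∈ γ ⁻¹' u b) → a = b := by
    rintro a b ⟨z, hza, hzb⟩
    exact hinj (max_seg_eq K (u a) (u b) (hu a) (hu b) ⟨γ z, hza, hzb⟩)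
  set m : ℂ := (‖c‖ : ℂ) * Complex.I / (starRingEnd ℂ) c with hmdef
  have hkey : ∀ k, N ≤ k → ∃ z, z ∈ γ ⁻¹' u (ι k) ∧ ((z : ℂ) = m ∨ (z : ℂ) = -m) := by
    intro k hk
    obtain ⟨h1, h2⟩ := hN k hk
    have hsC : s (ι k) ∈ γ ⁻¹' u (ι k) := by
      simp only [Set.mem_preimage, hs]; exact hmemA _
    have hs'C : s' (ι k) ∈ γ ⁻¹' u (ι k) := by
      simp only [Set.mem_preimage, hs']; exact hmemB _
    have himg : IsPreconnected (f '' (γ ⁻¹' u (ι k))) := (hCconn _).image f hfc.continuousOn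
    have h0 : (0 : ℝ) ∈ f '' (γ ⁻¹' u (ι k)) :=
      himg.Icc_subset ⟨_, hs'C, rfl⟩ ⟨_, hsC, rfl⟩ ⟨h2.le, h1.le⟩
    obtain ⟨z, hzC, hz0⟩ := h0
    exact ⟨z, hzC, zero_re_mul_conj c (z : ℂ) hc0 (habs1 z) hz0⟩
  obtain ⟨z₁, hz₁, hm₁⟩ := hkey N le_rfl
  obtain ⟨z₂, hz₂, hm₂⟩ := hkey (N + 1) (by omega)
  obtain ⟨z₃, hz₃, hm₃⟩ := hkey (N + 2) (by omega)
  have hne : ∀ i j : ℕ, i ≠ j → ∀ za zb : Metric.sphere (0 : ℂ) 1,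
      za ∈ γ ⁻¹' u (ι i) → zb ∈ γ ⁻¹' u (ι j) → (za : ℂ) = (zb : ℂ) → False := by
    intro i j hij za zb hza hzb hzz
    have hzb' : za ∈ γ ⁻¹' u (ι j) := by rw [Subtype.ext hzz]; exact hzb
    exact hij (hι.injective (hdisj _ _ ⟨za, hza, hzb'⟩))
  rcases hm₁ with e1 | e1 <;> rcases hm₂ with e2 | e2 <;> rcases hm₃ with e3 | e3
  · exact hne N (N + 1) (by omega) z₁ z₂ hz₁ hz₂ (e1.trans e2.symm)
  · exact hne N (N + 1) (by omega) z₁ z₂ hz₁ hz₂ (e1.trans e2.symm)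
  · exact hne N (N + 2) (by omega) z₁ z₃ hz₁ hz₃ (e1.trans e3.symm)
  · exact hne (N + 1) (N + 2) (by omega) z₂ z₃ hz₂ hz₃ (e2.trans e3.symm)
  · exact hne (N + 1) (N + 2) (by omega) z₂ z₃ hz₂ hz₃ (e2.trans e3.symm)
  · exact hne N (N + 2) (by omega) z₁ z₃ hz₁ hz₃ (e1.trans e3.symm)
  · exact hne N (N + 1) (by omega) z₁ z₂ hz₁ hz₂ (e1.trans e2.symm)
  · exact hne N (N + 1) (by omega) z₁ z₂ hz₁ hz₂ (e1.trans e2.symm)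
end

section
/- Let γ be a continuous injective map from the unit circle to ℝ² with image the Jordan curve K. If (γ_n)_{n ∈ ℕ} is a sequence of pairwise disjoint arcs of K (images under γ of nondegenerate closed arcs of the circle), then the diameters of the sets γ_n tend to 0 as n → ∞. -/
/-!
Pulled back to the circle, the arcs are pairwise disjoint connected sets `C n`, and since `γ` is
uniformly continuous it suffices that their diameters tend to `0`. Two distinct points `p, q` of
the circle are separated by the linear functional `⟪·, q - p⟫`, which vanishes at only two points
of the circle. By the intermediate value theorem a connected set passing near both `p` and `q`
contains one of these two points, and only finitely many disjoint sets can do so. Covering the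
compact set of pairs at distance `≥ ε / 2` by finitely many such neighbourhoods shows that only
finitely many `C n` have diameter `≥ ε`.
-/

/-- A nondegenerate closed arc of the unit circle: a closed connected subset that
is neither empty, a single point, nor the whole circle. (Connectedness in Mathlib
includes nonemptiness.) -/
def IsCircleArc (C : Set (Metric.sphere (0 : ℂ) 1)) : Prop :=
  IsClosed C ∧ IsConnected C ∧ (∀ z, C ≠ {z}) ∧ C ≠ Set.univ

open Set Filter Topology Metric Function ComplexConjugate

theorem Pairwise.finite_setOf_inter_nonempty {ι X : Type*} {C : ι → Set X}
    (hC : Pairwise (Disjoint on C)) {F : Set X} (hF : F.Finite) :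
    {i | (C i ∩ F).Nonempty}.Finite := by
  have hunion : {i | (C i ∩ F).Nonempty} = ⋃ x ∈ F, {i | x ∈ C i} := by
    ext i
    simp [Set.Nonempty, and_comm]
  rw [hunion]
  exact hF.biUnion fun x _ =>
    Subsingleton.finite fun i hi j hj => hC.eq (not_disjoint_iff.2 ⟨x, hi, hj⟩)

def PointsSeparatedByFiniteZeroSets (X : Type*) [TopologicalSpace X] : Prop :=
  ∀ p q : X, p ≠ q → ∃ f : X → ℝ, Continuous f ∧ f p < 0 ∧ 0 < f q ∧ (f ⁻¹' {0}).Finite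

namespace PointsSeparatedByFiniteZeroSets

theorem exists_mem_nhds_finite_inter_nonempty {X : Type*} [TopologicalSpace X]
    (hX : PointsSeparatedByFiniteZeroSets X) {w : X × X} (hw : w.1 ≠ w.2) :
    ∃ N ∈ 𝓝 w, ∃ F : Set X, F.Finite ∧ ∀ C : Set X, IsPreconnected C →
      ∀ x ∈ C, ∀ y ∈ C, (x, y) ∈ N → (C ∩ F).Nonempty := by
  obtain ⟨f, hf, hp, hq, hF⟩ := hX w.1 w.2 hw
  refine ⟨(f ⁻¹' Iio 0) ×ˢ (f ⁻¹' Ioi 0), prod_mem_nhds ?_ ?_, _, hF, ?_⟩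
  · exact hf.continuousAt.preimage_mem_nhds (Iio_mem_nhds hp)
  · exact hf.continuousAt.preimage_mem_nhds (Ioi_mem_nhds hq)
  · rintro C hC x hx y hy ⟨hfx, hfy⟩
    exact hC.intermediate_value hx hy hf.continuousOn ⟨hfx.le, hfy.le⟩

variable {X : Type*} [PseudoMetricSpace X] [CompactSpace X] {ι : Type*} {C : ι → Set X}

theorem finite_setOf_le_diam (hX : PointsSeparatedByFiniteZeroSets X)
    (hC : ∀ i, IsPreconnected (C i)) (hdisj : Pairwise (Disjoint on C)) {ε : ℝ} (hε : 0 < ε) :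
    {i | ε ≤ diam (C i)}.Finite := by
  set K := {w : X × X | ε / 2 ≤ dist w.1 w.2}
  have hK : IsCompact K := (isClosed_le continuous_const continuous_dist).isCompact
  have hne : ∀ w ∈ K, w.1 ≠ w.2 := fun w (hw : ε / 2 ≤ dist w.1 w.2) h => by
    rw [h, dist_self] at hw
    linarith
  choose N hN F hF hNF using fun w hw => hX.exists_mem_nhds_finite_inter_nonempty (hne w hw)
  obtain ⟨t, hKt⟩ := hK.elim_nhds_subcover' N hN
  refine (hdisj.finite_setOf_inter_nonempty
    (t.finite_toSet.biUnion fun w _ => hF w w.2)).subset fun i hi => ?_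
  obtain ⟨x, hx, y, hy, hxy⟩ : ∃ x ∈ C i, ∃ y ∈ C i, ε / 2 ≤ dist x y := by
    by_contra! h
    have := diam_le_of_forall_dist_le (by positivity) fun x hx y hy => (h x hx y hy).le
    linarith [hi.trans this]
  obtain ⟨w, hwt, hw⟩ := mem_iUnion₂.1 (hKt (show (x, y) ∈ K from hxy))
  obtain ⟨z, hzC, hzF⟩ := hNF w w.2 (C i) (hC i) x hx y hy hw
  exact ⟨z, hzC, mem_biUnion hwt hzF⟩

theorem tendsto_cofinite_diam_zero (hX : PointsSeparatedByFiniteZeroSets X)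
    (hC : ∀ i, IsPreconnected (C i)) (hdisj : Pairwise (Disjoint on C)) :
    Tendsto (fun i => diam (C i)) cofinite (𝓝 0) :=
  tendsto_order.2 ⟨fun _ ha => Eventually.of_forall fun _ => ha.trans_le diam_nonneg,
    fun _ ha => (hX.finite_setOf_le_diam hC hdisj ha).eventually_cofinite_notMem.mono
      fun _ hi => not_le.1 hi⟩

end PointsSeparatedByFiniteZeroSets

theorem Complex.finite_setOf_sphere_inner_eq_zero {w : ℂ} (hw : w ≠ 0) :
    {z : sphere (0 : ℂ) 1 | inner ℝ (z : ℂ) w = 0}.Finite := by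
  set g : sphere (0 : ℂ) 1 → ℂ := fun z => w * conj (z : ℂ)
  have hg : Injective g := fun z z' h =>
    Subtype.ext (star_injective (mul_left_cancel₀ hw h))
  refine ((toFinite {(‖w‖ : ℂ) * I, -((‖w‖ : ℂ) * I)}).preimage hg.injOn).subset
    fun z (hz : inner ℝ (z : ℂ) w = 0) => ?_
  have hre : (g z).re = 0 := by rwa [Complex.inner] at hz
  have him : |(g z).im| = ‖w‖ := by
    rw [abs_im_eq_norm.2 hre]
    simp [g]
  have hgz : g z = (g z).im * I := Complex.ext (by simp [hre]) (by simp)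
  rw [mem_preimage, hgz]
  rcases (abs_eq (norm_nonneg w)).1 him with h | h <;> simp [h]

theorem pointsSeparatedByFiniteZeroSets_sphere :
    PointsSeparatedByFiniteZeroSets (sphere (0 : ℂ) 1) := by
  intro p q hpq
  have hw : (q - p : ℂ) ≠ 0 := sub_ne_zero.2 fun h => hpq (Subtype.ext h).symm
  have hsum : inner ℝ (q : ℂ) (q - p) + inner ℝ (p : ℂ) (q - p) = 0 := by
    rw [← inner_add_left, real_inner_add_sub_eq_zero_iff, norm_eq_of_mem_sphere,
      norm_eq_of_mem_sphere]
  have hdiff : inner ℝ (q : ℂ) (q - p) - inner ℝ (p : ℂ) (q - p) = ‖(q - p : ℂ)‖ ^ 2 := by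
    rw [← inner_sub_left, real_inner_self_eq_norm_sq]
  have hpos : 0 < ‖(q - p : ℂ)‖ ^ 2 := by positivity
  exact ⟨fun z => inner ℝ (z : ℂ) (q - p), by fun_prop, by linarith, by linarith,
    Complex.finite_setOf_sphere_inner_eq_zero hw⟩

theorem UniformContinuous.tendsto_diam_image_zero {X Y ι : Type*} [PseudoMetricSpace X]
    [PseudoMetricSpace Y] {f : X → Y} (hf : UniformContinuous f) {s : ι → Set X} {l : Filter ι}
    (hs : ∀ i, Bornology.IsBounded (s i)) (h : Tendsto (fun i => diam (s i)) l (𝓝 0)) :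
    Tendsto (fun i => diam (f '' s i)) l (𝓝 0) := by
  refine tendsto_order.2 ⟨fun _ ha => Eventually.of_forall fun _ => ha.trans_le diam_nonneg,
    fun ε hε => ?_⟩
  obtain ⟨δ, hδ, hfδ⟩ := Metric.uniformContinuous_iff.1 hf (ε / 2) (half_pos hε)
  filter_upwards [(tendsto_order.1 h).2 δ hδ] with i hi
  refine (diam_le_of_forall_dist_le (half_pos hε).le ?_).trans_lt (half_lt_self hε)
  rintro _ ⟨x, hx, rfl⟩ _ ⟨y, hy, rfl⟩
  exact (hfδ ((dist_le_diam_of_mem (hs i) hx hy).trans_lt hi)).le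

theorem tendsto_diam_zero_of_disjoint_arcs_general
    (γ : Metric.sphere (0 : ℂ) 1 → EuclideanSpace ℝ (Fin 2))
    (hcont : Continuous γ)
    (A : ℕ → Set (EuclideanSpace ℝ (Fin 2)))
    (harc : ∀ n, ∃ C : Set (Metric.sphere (0 : ℂ) 1), IsCircleArc C ∧ A n = γ '' C)
    (hdisj : Pairwise (Function.onFun Disjoint A)) :
    Filter.Tendsto (fun n => Metric.diam (A n)) Filter.atTop (nhds 0) := by
  choose C hC hAC using harc
  have hCdisj : Pairwise (Disjoint on C) := fun m n hmn => by
    have hAdisj := hdisj hmn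
    simp only [onFun, hAC] at hAdisj
    exact hAdisj.of_image
  have hCdiam : Tendsto (fun n => diam (C n)) atTop (𝓝 0) := by
    rw [← Nat.cofinite_eq_atTop]
    exact pointsSeparatedByFiniteZeroSets_sphere.tendsto_cofinite_diam_zero
      (fun n => (hC n).2.1.isPreconnected) hCdisj
  have hγ : UniformContinuous γ := CompactSpace.uniformContinuous_of_continuous hcont
  simpa only [hAC] using hγ.tendsto_diam_image_zero (fun _ => isBounded_of_compactSpace) hCdiam

/-- The diameters of a sequence of pairwise disjoint arcs of a Jordan curve tend to 0. -/
theorem tendsto_diam_zero_of_disjoint_arcs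
    (γ : Metric.sphere (0 : ℂ) 1 → EuclideanSpace ℝ (Fin 2))
    (hcont : Continuous γ) (hinj : Function.Injective γ)
    (K : Set (EuclideanSpace ℝ (Fin 2))) (hK : Set.range γ = K)
    (A : ℕ → Set (EuclideanSpace ℝ (Fin 2)))
    (harc : ∀ n, ∃ C : Set (Metric.sphere (0 : ℂ) 1), IsCircleArc C ∧ A n = γ '' C)
    (hdisj : Pairwise (Function.onFun Disjoint A)) :
    Filter.Tendsto (fun n => Metric.diam (A n)) Filter.atTop (nhds 0) :=
  tendsto_diam_zero_of_disjoint_arcs_general γ hcont A harc hdisj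
end

section
/- Let K ⊆ ℝ² be a Jordan curve and let δ > 0. There is no sequence (u_n)_{n ∈ ℕ} of pairwise disjoint nondegenerate vertical segments contained in K, each of length at least δ, that converges in the Hausdorff distance to a vertical segment u* of length at least δ. -/
/-!
Each point `(x₀, q)` with `a₀ < q < b₀` lies on `K`; take three of them, with preimages
`t₁, t₂, w` on the circle. For large `n` the preimage of the `n`-th segment is a connected set
passing near `t₁` and near `t₂`, and by disjointness at most one of them contains `w`. Cut at
`w`, the circle becomes an interval, in which two connected sets both running from near `t₁`
to near `t₂` must meet. So two of the segments meet, a contradiction.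
-/

open Filter Set Topology Metric

lemma half_add_mem_uIcc_of_dist_le {v₁ v₂ p₁ p₂ : ℝ}
    (h₁ : dist p₁ v₁ ≤ dist v₂ v₁ / 2) (h₂ : dist p₂ v₂ ≤ dist v₂ v₁ / 2) :
    (v₁ + v₂) / 2 ∈ uIcc p₁ p₂ := by
  simp only [Real.dist_eq] at h₁ h₂
  rcases abs_le.mp h₁ with ⟨h₁l, h₁r⟩
  rcases abs_le.mp h₂ with ⟨h₂l, h₂r⟩
  rcases le_total v₁ v₂ with h | h
  · rw [abs_of_nonneg (sub_nonneg.mpr h)] at h₁l h₁r h₂l h₂r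
    exact Icc_subset_uIcc ⟨by linarith, by linarith⟩
  · rw [abs_of_nonpos (sub_nonpos.mpr h)] at h₁l h₁r h₂l h₂r
    exact Icc_subset_uIcc' ⟨by linarith, by linarith⟩

/-- The argument of `z` measured from `-w`, so that the branch cut of `Complex.arg` sits at
`z = w`. -/
noncomputable def argCutAt (w z : sphere (0 : ℂ) 1) : ℝ :=
  Complex.arg (-(z : ℂ) / w)

lemma argCutAt_injective (w : sphere (0 : ℂ) 1) : Function.Injective (argCutAt w) := by
  intro z z' h
  have hw : (w : ℂ) ≠ 0 := ne_zero_of_mem_unit_sphere w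
  have hnorm : ‖-(z : ℂ) / w‖ = ‖-(z' : ℂ) / w‖ := by
    simp only [norm_div, norm_neg, norm_eq_of_mem_sphere]
  have hdiv := Complex.ext_norm_arg hnorm h
  exact Subtype.ext (neg_injective ((div_left_inj' hw).mp hdiv))

lemma continuousAt_argCutAt {w z : sphere (0 : ℂ) 1} (hz : z ≠ w) :
    ContinuousAt (argCutAt w) z := by
  have hw : (w : ℂ) ≠ 0 := ne_zero_of_mem_unit_sphere w
  have hslit : -(z : ℂ) / w ∈ Complex.slitPlane := by
    rw [Complex.mem_slitPlane_iff_not_le_zero]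
    intro hle
    have hre : (-(z : ℂ) / w).re = -1 := by
      rw [Complex.re_eq_neg_norm.mpr hle, norm_div, norm_neg, norm_eq_of_mem_sphere,
        norm_eq_of_mem_sphere, div_one]
    have hunit : -(z : ℂ) / w = -1 :=
      Complex.ext (by simpa using hre) (by simpa using (Complex.le_def.mp hle).2)
    exact hz (Subtype.ext (by simpa using (div_eq_iff hw).mp hunit))
  exact ContinuousAt.comp (g := Complex.arg) (Complex.continuousAt_arg hslit)
    (continuous_subtype_val.neg.div_const (w : ℂ)).continuousAt

lemma half_add_mem_argCutAt_image {w p₁ p₂ : sphere (0 : ℂ) 1} {C : Set (sphere (0 : ℂ) 1)}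
    (hC : IsPreconnected C) (hwC : w ∉ C) (hp₁ : p₁ ∈ C) (hp₂ : p₂ ∈ C) {v₁ v₂ : ℝ}
    (h₁ : dist (argCutAt w p₁) v₁ ≤ dist v₂ v₁ / 2)
    (h₂ : dist (argCutAt w p₂) v₂ ≤ dist v₂ v₁ / 2) :
    (v₁ + v₂) / 2 ∈ argCutAt w '' C := by
  have hcont : ContinuousOn (argCutAt w) C := fun z hz ↦
    (continuousAt_argCutAt (ne_of_mem_of_not_mem hz hwC)).continuousWithinAt
  exact (hC.image _ hcont).ordConnected.uIcc_subset (mem_image_of_mem _ hp₁)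
    (mem_image_of_mem _ hp₂) (half_add_mem_uIcc_of_dist_le h₁ h₂)

/-- On the circle cut at `w`, both sets map to intervals straddling the midpoint of the
arguments of `t₁` and `t₂`. -/
theorem exists_nhds_inter_nonempty_of_isPreconnected {t₁ t₂ w : sphere (0 : ℂ) 1}
    (h₁₂ : t₁ ≠ t₂) (h₁ : t₁ ≠ w) (h₂ : t₂ ≠ w) :
    ∃ U₁ ∈ 𝓝 t₁, ∃ U₂ ∈ 𝓝 t₂, ∀ C C' : Set (sphere (0 : ℂ) 1),
      IsPreconnected C → IsPreconnected C' → w ∉ C → w ∉ C' →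
      (C ∩ U₁).Nonempty → (C ∩ U₂).Nonempty → (C' ∩ U₁).Nonempty → (C' ∩ U₂).Nonempty →
      (C ∩ C').Nonempty := by
  set ψ := argCutAt w
  have hr : 0 < dist (ψ t₂) (ψ t₁) / 2 :=
    half_pos (dist_pos.mpr ((argCutAt_injective w).ne h₁₂.symm))
  have hU : ∀ t ≠ w, ψ ⁻¹' closedBall (ψ t) (dist (ψ t₂) (ψ t₁) / 2) ∈ 𝓝 t := fun t ht ↦
    (continuousAt_argCutAt ht).preimage_mem_nhds (closedBall_mem_nhds _ hr)
  refine ⟨_, hU t₁ h₁, _, hU t₂ h₂, ?_⟩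
  rintro C C' hC hC' hwC hwC' ⟨p₁, hp₁C, hp₁⟩ ⟨p₂, hp₂C, hp₂⟩ ⟨p₁', hp₁C', hp₁'⟩
    ⟨p₂', hp₂C', hp₂'⟩
  obtain ⟨z, hz, hzψ⟩ := half_add_mem_argCutAt_image hC hwC hp₁C hp₂C hp₁ hp₂
  obtain ⟨z', hz', hz'ψ⟩ := half_add_mem_argCutAt_image hC' hwC' hp₁C' hp₂C' hp₁' hp₂'
  exact ⟨z, hz, argCutAt_injective w (hz'ψ.trans hzψ.symm) ▸ hz'⟩

lemma exists_eq_forall_nhds_eventually_preimage_inter_nonempty {X : Type*}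
    [TopologicalSpace X] {γ : X → ℝ × ℝ} (hγ : IsClosedEmbedding γ) {x a b : ℕ → ℝ}
    {x₀ a₀ b₀ q : ℝ} (hsub : ∀ n, {x n} ×ˢ Icc (a n) (b n) ⊆ range γ)
    (hx : Tendsto x atTop (𝓝 x₀)) (ha : Tendsto a atTop (𝓝 a₀))
    (hb : Tendsto b atTop (𝓝 b₀)) (ha₀ : a₀ < q) (hb₀ : q < b₀) :
    ∃ t, γ t = (x₀, q) ∧
      ∀ U ∈ 𝓝 t, ∀ᶠ n in atTop, (γ ⁻¹' ({x n} ×ˢ Icc (a n) (b n)) ∩ U).Nonempty := by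
  have hmem : ∀ᶠ n in atTop, (x n, q) ∈ ({x n} ×ˢ Icc (a n) (b n) : Set (ℝ × ℝ)) := by
    filter_upwards [ha.eventually_lt_const ha₀, hb.eventually_const_lt hb₀] with n h₁ h₂
    exact mk_mem_prod rfl ⟨h₁.le, h₂.le⟩
  have hlim : Tendsto (fun n ↦ (x n, q)) atTop (𝓝 (x₀, q)) := hx.prodMk_nhds tendsto_const_nhds
  obtain ⟨t, ht⟩ := hγ.isClosed_range.mem_of_tendsto hlim (hmem.mono fun n h ↦ hsub n h)
  refine ⟨t, ht, fun U hU ↦ ?_⟩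
  rw [hγ.isInducing.nhds_eq_comap, ht] at hU
  obtain ⟨V, hV, hVU⟩ := hU
  filter_upwards [hlim hV, hmem] with n hnV hnS
  obtain ⟨s, hs⟩ := hsub n hnS
  exact ⟨s, by rwa [mem_preimage, hs], hVU (by rwa [mem_preimage, hs])⟩

/-- There is no sequence of pairwise disjoint nondegenerate vertical segments
`{xₙ} × [aₙ, bₙ]` contained in a Jordan curve `K`, each of length at least `δ`,
converging in the Hausdorff distance (equivalently, endpointwise) to a vertical
segment `{x₀} × [a₀, b₀]` of length at least `δ`. -/
theorem no_hausdorff_limit_of_disjoint_long_segments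
    (K : Set (ℝ × ℝ)) (hK : IsJordanCurve K) (δ : ℝ) (hδ : 0 < δ) :
    ¬ ∃ (x a b : ℕ → ℝ) (x₀ a₀ b₀ : ℝ),
        (∀ n, a n < b n) ∧
        (∀ n, ({x n} ×ˢ Set.Icc (a n) (b n) : Set (ℝ × ℝ)) ⊆ K) ∧
        (∀ n, δ ≤ b n - a n) ∧
        Pairwise (Function.onFun Disjoint
          (fun n => ({x n} ×ˢ Set.Icc (a n) (b n) : Set (ℝ × ℝ)))) ∧
        δ ≤ b₀ - a₀ ∧
        Filter.Tendsto x Filter.atTop (nhds x₀) ∧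
        Filter.Tendsto a Filter.atTop (nhds a₀) ∧
        Filter.Tendsto b Filter.atTop (nhds b₀) := by
  rintro ⟨x, a, b, x₀, a₀, b₀, -, hsub, -, hdisj, hlen₀, hx, ha, hb⟩
  obtain ⟨γ, hγc, hγi, rfl⟩ := hK
  have hγ : IsClosedEmbedding γ := hγc.isClosedEmbedding hγi
  set S : ℕ → Set (ℝ × ℝ) := fun n ↦ {x n} ×ˢ Icc (a n) (b n)
  have hpoint := fun q (h₀ : a₀ < q) (h₁ : q < b₀) ↦
    exists_eq_forall_nhds_eventually_preimage_inter_nonempty hγ hsub hx ha hb h₀ h₁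
  obtain ⟨t₁, ht₁, hC₁⟩ := hpoint (a₀ + δ / 4) (by linarith) (by linarith)
  obtain ⟨t₂, ht₂, hC₂⟩ := hpoint (a₀ + δ / 2) (by linarith) (by linarith)
  obtain ⟨w, hw, -⟩ := hpoint (a₀ + 3 * δ / 4) (by linarith) (by linarith)
  have hne : ∀ {s t : sphere (0 : ℂ) 1} {q r : ℝ},
      γ s = (x₀, q) → γ t = (x₀, r) → q ≠ r → s ≠ t :=
    fun hs ht hqr hst ↦ hqr (by simpa [hst, ht] using hs.symm)
  obtain ⟨U₁, hU₁, U₂, hU₂, hmeet⟩ := exists_nhds_inter_nonempty_of_isPreconnected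
    (hne ht₁ ht₂ (by linarith)) (hne ht₁ hw (by linarith)) (hne ht₂ hw (by linarith))
  have hC : ∀ n, IsPreconnected (γ ⁻¹' S n) := fun n ↦ by
    rw [← hγ.isInducing.isPreconnected_image, image_preimage_eq_of_subset (hsub n)]
    exact isPreconnected_singleton.prod isPreconnected_Icc
  have hwS : {n | w ∈ γ ⁻¹' S n}.Subsingleton := fun n hn m hm ↦
    by_contra fun hnm ↦ disjoint_left.mp (hdisj hnm) hn hm
  have hinf : {n | (γ ⁻¹' S n ∩ U₁).Nonempty ∧ (γ ⁻¹' S n ∩ U₂).Nonempty}.Infinite :=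
    Nat.frequently_atTop_iff_infinite.mp ((hC₁ U₁ hU₁).and (hC₂ U₂ hU₂)).frequently
  obtain ⟨n, ⟨⟨hn₁, hn₂⟩, hwn⟩, m, ⟨⟨hm₁, hm₂⟩, hwm⟩, hnm⟩ := (hinf.sdiff hwS.finite).nontrivial
  exact (hmeet _ _ (hC n) (hC m) hwn hwm hn₁ hn₂ hm₁ hm₂).ne_empty
    ((hdisj hnm).preimage γ).inter_eq
end
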